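/- arXiv:2505.23089 — 5 statements merged into one kernel-verified Lean document; each statement's English description precedes it below -/
import Mathlib

section
/- Suppose (X, G) and (X, H) are CR-dynamical systems on the same space X such that G ⊆ H and the set of legal points of (X, G) equals the set of legal points of (X, H). If (X, H) has the (2,1)-shadowing property, then (X, G) has the (2,1)-shadowing property. -/
open Set Filter Topology

/-- The n-fold relational composition of `G` (with `G⁰` the diagonal). -/
def relPow {X : Type*} (G : Set (X × X)) : ℕ → Set (X × X)
  | 0 => Set.diagonal X
  | n + 1 => {p : X × X | ∃ z : X, (p.1, z) ∈ relPow G n ∧ (z, p.2) ∈ G}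

/-- `s` is a trajectory of `x` in `(X, G)`. -/
def IsTrajectory {X : Type*} (G : Set (X × X)) (x : X) (s : ℕ → X) : Prop :=
  s 0 = x ∧ ∀ n : ℕ, (s n, s (n + 1)) ∈ G

/-- `x` is a legal point of `(X, G)`. -/
def IsLegal {X : Type*} (G : Set (X × X)) (x : X) : Prop :=
  ∃ s : ℕ → X, IsTrajectory G x s

/-- The set of non-degenerate points of `(X, G)`. -/
def ndDom {X : Type*} (G : Set (X × X)) : Set X := {x : X | ∃ y : X, (x, y) ∈ G}

/-- An entourage of the unique compatible uniformity on a compact Hausdorff space: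
a neighbourhood of the diagonal in `X × X`. -/
def IsEntourage {X : Type*} [TopologicalSpace X] (U : Set (X × X)) : Prop :=
  U ∈ 𝓝ˢ (Set.diagonal X)

/-- `(V,1)`-pseudo-orbit. -/
def IsPO1 {X : Type*} (G V : Set (X × X)) (x : ℕ → X) : Prop :=
  (∀ n : ℕ, x n ∈ ndDom G) ∧ ∀ n : ℕ, ∀ y : X, (x n, y) ∈ G → (y, x (n + 1)) ∈ V

/-- `(V,2)`-pseudo-orbit. -/
def IsPO2 {X : Type*} (G V : Set (X × X)) (x : ℕ → X) : Prop :=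
  (∀ n : ℕ, x n ∈ ndDom G) ∧ ∀ n : ℕ, ∃ y : X, (x n, y) ∈ G ∧ (y, x (n + 1)) ∈ V

/-- The legal point `y` `(U,1)`-shadows the sequence `x`. -/
def Shadows1 {X : Type*} (G U : Set (X × X)) (y : X) (x : ℕ → X) : Prop :=
  IsLegal G y ∧ ∀ s : ℕ → X, IsTrajectory G y s → ∀ n : ℕ, (s n, x n) ∈ U

/-- The point `y` `(U,2)`-shadows the sequence `x`. -/
def Shadows2 {X : Type*} (G U : Set (X × X)) (y : X) (x : ℕ → X) : Prop :=
  ∃ s : ℕ → X, IsTrajectory G y s ∧ ∀ n : ℕ, (s n, x n) ∈ U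

/-- The `(1,1)`-shadowing property. -/
def Shadowing11 {X : Type*} [TopologicalSpace X] (G : Set (X × X)) : Prop :=
  ∀ U : Set (X × X), IsEntourage U → ∃ V : Set (X × X), IsEntourage V ∧
    ∀ x : ℕ → X, IsPO1 G V x → ∃ y : X, Shadows1 G U y x

/-- The `(1,2)`-shadowing property. -/
def Shadowing12 {X : Type*} [TopologicalSpace X] (G : Set (X × X)) : Prop :=
  ∀ U : Set (X × X), IsEntourage U → ∃ V : Set (X × X), IsEntourage V ∧
    ∀ x : ℕ → X, IsPO1 G V x → ∃ y : X, Shadows2 G U y x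

/-- The `(2,1)`-shadowing property. -/
def Shadowing21 {X : Type*} [TopologicalSpace X] (G : Set (X × X)) : Prop :=
  ∀ U : Set (X × X), IsEntourage U → ∃ V : Set (X × X), IsEntourage V ∧
    ∀ x : ℕ → X, IsPO2 G V x → ∃ y : X, Shadows1 G U y x

/-- The `(2,2)`-shadowing property. -/
def Shadowing22 {X : Type*} [TopologicalSpace X] (G : Set (X × X)) : Prop :=
  ∀ U : Set (X × X), IsEntourage U → ∃ V : Set (X × X), IsEntourage V ∧
    ∀ x : ℕ → X, IsPO2 G V x → ∃ y : X, Shadows2 G U y x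

section Monotonicity

variable {X : Type*} {G H V U : Set (X × X)}

theorem ndDom_mono (hGH : G ⊆ H) : ndDom G ⊆ ndDom H :=
  fun _ ⟨y, hy⟩ => ⟨y, hGH hy⟩

theorem IsTrajectory.mono {x : X} {s : ℕ → X} (hGH : G ⊆ H) (hs : IsTrajectory G x s) :
    IsTrajectory H x s :=
  ⟨hs.1, fun n => hGH (hs.2 n)⟩

theorem IsPO2.mono {x : ℕ → X} (hGH : G ⊆ H) (hx : IsPO2 G V x) : IsPO2 H V x :=
  ⟨fun n => ndDom_mono hGH (hx.1 n), fun n => (hx.2 n).imp fun _ hy => ⟨hGH hy.1, hy.2⟩⟩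

theorem Shadows1.of_superset {y : X} {x : ℕ → X} (hGH : G ⊆ H) (hy : IsLegal G y)
    (hshad : Shadows1 H U y x) : Shadows1 G U y x :=
  ⟨hy, fun s hs => hshad.2 s (hs.mono hGH)⟩

end Monotonicity

theorem stmt_4_general {X : Type*} [TopologicalSpace X]
    (G H : Set (X × X))
    (hsub : G ⊆ H) (hlegal : {x : X | IsLegal G x} = {x : X | IsLegal H x})
    (hshad : Shadowing21 H) :
    Shadowing21 G := by
  intro U hU
  obtain ⟨V, hV, hVshad⟩ := hshad U hU
  refine ⟨V, hV, fun x hx => ?_⟩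
  obtain ⟨y, hy⟩ := hVshad x (hx.mono hsub)
  have hyG : IsLegal G y := (Set.ext_iff.mp hlegal y).mpr hy.1
  exact ⟨y, hy.of_superset hsub hyG⟩

/-- contraction lemma for the (2,1)-shadowing property. -/
theorem stmt_4 {X : Type*} [TopologicalSpace X] [CompactSpace X] [T2Space X] [Nonempty X]
    (G H : Set (X × X))
    (hGclosed : IsClosed G) (hGne : G.Nonempty)
    (hGpow : ∀ n : ℕ, 1 ≤ n → (relPow G n).Nonempty)
    (hHclosed : IsClosed H) (hHne : H.Nonempty)
    (hHpow : ∀ n : ℕ, 1 ≤ n → (relPow H n).Nonempty)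
    (hsub : G ⊆ H) (hlegal : {x : X | IsLegal G x} = {x : X | IsLegal H x})
    (hshad : Shadowing21 H) :
    Shadowing21 G :=
  stmt_4_general G H hsub hlegal hshad
end

section
/- Suppose (X, G) is a CR-dynamical system. Then for every integer k ≥ 1, the set of legal points of (X, G) equals the set of legal points of (X, Gᵏ). -/
/-!
Sampling a `G`-trajectory at the multiples of `k` gives a `Gᵏ`-trajectory. Conversely, the
points from which some `Gʲ`-path leads to a `Gᵏ`-legal point form a set in which every point
has a `G`-successor (a `Gᵏ`-step splits off a first `G`-step since `k ≥ 1`), and every point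
of such a set starts a `G`-trajectory obtained by iterating a choice of successors.
-/

open Set Filter Topology

theorem exists_mem_of_mem_relPow_succ {X : Type*} {G : Set (X × X)} {n : ℕ} {x y : X}
    (h : (x, y) ∈ relPow G (n + 1)) : ∃ z, (x, z) ∈ G ∧ (z, y) ∈ relPow G n := by
  induction n generalizing y with
  | zero =>
    obtain ⟨z, rfl : x = z, hzy⟩ := h
    exact ⟨y, hzy, rfl⟩
  | succ n ih =>
    obtain ⟨w, hxw, hwy⟩ := h
    obtain ⟨z, hxz, hzw⟩ := ih hxw
    exact ⟨z, hxz, w, hzw, hwy⟩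

theorem IsTrajectory.mem_relPow {X : Type*} {G : Set (X × X)} {x : X} {s : ℕ → X}
    (hs : IsTrajectory G x s) (m j : ℕ) : (s m, s (m + j)) ∈ relPow G j := by
  induction j with
  | zero => exact rfl
  | succ j ih => exact ⟨s (m + j), ih, hs.2 (m + j)⟩

theorem IsLegal.relPow {X : Type*} {G : Set (X × X)} {x : X} (k : ℕ) (hx : IsLegal G x) :
    IsLegal (relPow G k) x := by
  obtain ⟨s, hs⟩ := hx
  refine ⟨fun n => s (n * k), by simpa using hs.1, fun n => ?_⟩
  simpa [add_one_mul] using hs.mem_relPow (n * k) k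

theorem IsLegal.exists_mem_isLegal {X : Type*} {G : Set (X × X)} {x : X} (hx : IsLegal G x) :
    ∃ y, (x, y) ∈ G ∧ IsLegal G y := by
  obtain ⟨s, rfl, hs⟩ := hx
  exact ⟨s 1, hs 0, fun n => s (n + 1), rfl, fun n => hs (n + 1)⟩

theorem isLegal_of_forall_exists_mem {X : Type*} {G : Set (X × X)} {S : Set X}
    (hS : ∀ y ∈ S, ∃ z ∈ S, (y, z) ∈ G) {x : X} (hx : x ∈ S) : IsLegal G x := by
  choose f hfS hfG using hS
  let next : S → S := fun y => ⟨f y y.2, hfS y y.2⟩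
  refine ⟨fun n => (next^[n] ⟨x, hx⟩ : X), rfl, fun n => ?_⟩
  simp only [Function.iterate_succ_apply']
  exact hfG _ _

theorem isLegal_of_isLegal_relPow {X : Type*} {G : Set (X × X)} {x : X} {k : ℕ} (hk : 0 < k)
    (hx : IsLegal (relPow G k) x) : IsLegal G x := by
  obtain ⟨k, rfl⟩ : ∃ j, k = j + 1 := ⟨k - 1, by omega⟩
  let S : Set X := {y | ∃ j b, (y, b) ∈ relPow G j ∧ IsLegal (relPow G (k + 1)) b}
  refine isLegal_of_forall_exists_mem (S := S) ?_ ⟨0, x, rfl, hx⟩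
  rintro y ⟨_ | j, b, hyb, hb⟩
  · obtain rfl : y = b := hyb
    obtain ⟨c, hyc, hc⟩ := hb.exists_mem_isLegal
    obtain ⟨z, hyz, hzc⟩ := exists_mem_of_mem_relPow_succ hyc
    exact ⟨z, ⟨k, c, hzc, hc⟩, hyz⟩
  · obtain ⟨z, hyz, hzb⟩ := exists_mem_of_mem_relPow_succ hyb
    exact ⟨z, ⟨j, b, hzb, hb⟩, hyz⟩

theorem stmt_5_general {X : Type*} (G : Set (X × X)) :
    ∀ k : ℕ, 1 ≤ k → {x : X | IsLegal G x} = {x : X | IsLegal (relPow G k) x} := by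
  intro k hk
  ext x
  exact ⟨IsLegal.relPow k, isLegal_of_isLegal_relPow hk⟩

/-- the legal points of (X,G) and (X,Gᵏ) coincide. -/
theorem stmt_5 {X : Type*} [TopologicalSpace X] [CompactSpace X] [T2Space X] [Nonempty X]
    (G : Set (X × X)) (hGclosed : IsClosed G) (hGne : G.Nonempty)
    (hGpow : ∀ n : ℕ, 1 ≤ n → (relPow G n).Nonempty) :
    ∀ k : ℕ, 1 ≤ k → {x : X | IsLegal G x} = {x : X | IsLegal (relPow G k) x} :=
  stmt_5_general G
end

section
/- Suppose (X, G) is a CR-dynamical system with Δ_X ⊆ G. If (X, G) has the (2,1)-shadowing property, then G = Δ_X. -/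
open Set Filter Topology

/-! Since `Δ_X ⊆ G`, every point is fixed and its constant sequence is a trajectory. A point
`(U,1)`-shadowing the `(V,2)`-pseudo-orbit `a, b, b, …` built from an edge `(a, b) ∈ G` is
therefore `U`-close to both `a` and `b`, which Hausdorffness forbids for a suitable `U` when
`a ≠ b`. -/

theorem exists_mem_nhdsSet_diagonal_forall_notMem_of_ne {X : Type*} [TopologicalSpace X]
    [T2Space X] {a b : X} (hab : a ≠ b) :
    ∃ U ∈ 𝓝ˢ (diagonal X), ∀ z, (z, a) ∈ U → (z, b) ∉ U := by
  obtain ⟨A, B, hA, hB, haA, hbB, hAB⟩ := t2_separation hab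
  refine ⟨(A ×ˢ A) ∪ (B ×ˢ B) ∪ (univ ×ˢ {a, b}ᶜ), ?_, ?_⟩
  · have hopen : IsOpen ((A ×ˢ A) ∪ (B ×ˢ B) ∪ (univ ×ˢ ({a, b} : Set X)ᶜ)) :=
      ((hA.prod hA).union (hB.prod hB)).union
        (isOpen_univ.prod (Set.toFinite _).isClosed.isOpen_compl)
    refine hopen.mem_nhdsSet.mpr ?_
    rintro ⟨x, y⟩ (rfl : x = y)
    by_cases hxA : x ∈ A
    · exact .inl (.inl ⟨hxA, hxA⟩)
    by_cases hxB : x ∈ B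
    · exact .inl (.inr ⟨hxB, hxB⟩)
    refine .inr ⟨trivial, ?_⟩
    rintro (rfl | rfl)
    exacts [hxA haA, hxB hbB]
  · intro z hza hzb
    have hzA : z ∈ A := by
      rcases hza with (⟨hz, -⟩ | ⟨-, haB⟩) | ⟨-, ha⟩
      exacts [hz, (hAB.ne_of_mem haA haB rfl).elim, (ha (.inl rfl)).elim]
    have hzB : z ∈ B := by
      rcases hzb with (⟨-, hbA⟩ | ⟨hz, -⟩) | ⟨-, hb⟩
      exacts [(hAB.ne_of_mem hbA hbB rfl).elim, hz, (hb (.inr rfl)).elim]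
    exact hAB.ne_of_mem hzA hzB rfl

section Reflexive

variable {X : Type*} {G : Set (X × X)}

theorem isTrajectory_const (hdiag : diagonal X ⊆ G) (x : X) :
    IsTrajectory G x (fun _ => x) :=
  ⟨rfl, fun _ => hdiag rfl⟩

theorem Shadows1.mem_of_diagonal_subset {U : Set (X × X)} {y : X} {x : ℕ → X}
    (h : Shadows1 G U y x) (hdiag : diagonal X ⊆ G) (n : ℕ) : (y, x n) ∈ U :=
  h.2 _ (isTrajectory_const hdiag y) n

theorem isPO2_ite_zero (hdiag : diagonal X ⊆ G) {V : Set (X × X)} (hV : diagonal X ⊆ V)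
    {a b : X} (hab : (a, b) ∈ G) :
    IsPO2 G V (fun n => if n = 0 then a else b) := by
  refine ⟨fun n => ⟨_, hdiag rfl⟩, fun n => ⟨b, ?_, hV rfl⟩⟩
  rcases n with _ | n
  exacts [hab, hdiag rfl]

end Reflexive

theorem stmt_13_general {X : Type*} [TopologicalSpace X] [T2Space X]
    (G : Set (X × X))
    (hdiag : Set.diagonal X ⊆ G)
    (hshad : Shadowing21 G) :
    G = Set.diagonal X := by
  refine Subset.antisymm ?_ hdiag
  rintro ⟨a, b⟩ hab
  by_contra hne
  obtain ⟨U, hU, hU_sep⟩ :=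
    exists_mem_nhdsSet_diagonal_forall_notMem_of_ne fun h : a = b => hne h
  obtain ⟨V, hV, hV_shad⟩ := hshad U hU
  obtain ⟨y, hy⟩ := hV_shad _ (isPO2_ite_zero hdiag (subset_of_mem_nhdsSet hV) hab)
  exact hU_sep y (hy.mem_of_diagonal_subset hdiag 0) (hy.mem_of_diagonal_subset hdiag 1)

/-- if Δ_X ⊆ G and (X,G) has the (2,1)-shadowing property, then G = Δ_X. -/
theorem stmt_13 {X : Type*} [TopologicalSpace X] [CompactSpace X] [T2Space X] [Nonempty X]
    (G : Set (X × X)) (hGclosed : IsClosed G) (hGne : G.Nonempty)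
    (hGpow : ∀ n : ℕ, 1 ≤ n → (relPow G n).Nonempty)
    (hdiag : Set.diagonal X ⊆ G)
    (hshad : Shadowing21 G) :
    G = Set.diagonal X :=
  stmt_13_general G hdiag hshad
end

section
/- Suppose (X, G) is a CR-dynamical system with Δ_X ⊆ Gⁿ for some positive integer n. If (X, G) has the (2,1)-shadowing property, then there exists a continuous self-map f : X → X such that G = {(x, f(x)) : x ∈ X}. -/
open Set Filter Topology

/-!
Since every point lies on a `G`-cycle of length `n`, every point is legal and has an
`n`-periodic trajectory. Given any trajectory `s` of `x`, the (2,1)-shadowing property yields,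
for every entourage `U`, a point `y` all of whose trajectories stay `U`-close to `s`; following an
`n`-periodic trajectory `t` of `y`, the single point `t 1 = t (n + 1)` is `U`-close to both `s 1`
and `s (n + 1)`, so `s 1 = s (n + 1)` by the Hausdorff property. If `(x, a), (x, b) ∈ G`, go once
around the cycle through `x` and then step to `a` (resp. `b`): this forces `a` and `b` to equal the
same point of the cycle. Hence `G` is the graph of a function, which is continuous because its
graph is closed and `X` is compact.
-/

open Function

section Trajectories

variable {X : Type*} {G : Set (X × X)}

lemma exists_chain_of_mem_relPow : ∀ {m : ℕ} {x y : X}, (x, y) ∈ relPow G m →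
    ∃ c : ℕ → X, c 0 = x ∧ c m = y ∧ ∀ k < m, (c k, c (k + 1)) ∈ G
  | 0, x, _, rfl => ⟨fun _ => x, rfl, rfl, by simp⟩
  | m + 1, x, y, ⟨z, hxz, hzy⟩ => by
    obtain ⟨c, hc0, hcm, hc⟩ := exists_chain_of_mem_relPow hxz
    refine ⟨update c (m + 1) y, by simpa [update_of_ne] using hc0, by simp, fun k hk => ?_⟩
    rcases Nat.lt_succ_iff_lt_or_eq.1 hk with hk | rfl
    · simpa [update_of_ne, hk.ne, (Nat.lt_succ_of_lt hk).ne] using hc k hk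
    · simpa [update_of_ne, hcm] using hzy

lemma exists_periodic_trajectory {n : ℕ} (hn : 0 < n) {x : X} (hx : (x, x) ∈ relPow G n) :
    ∃ t : ℕ → X, IsTrajectory G x t ∧ Periodic t n := by
  obtain ⟨c, hc0, hcn, hc⟩ := exists_chain_of_mem_relPow hx
  have hper : Periodic (fun k => c (k % n)) n := fun k => by simp
  have hstep : ∀ k < n, (c k, c ((k + 1) % n)) ∈ G := fun k hk => by
    rcases (show k + 1 ≤ n from hk).lt_or_eq with hlt | heq
    · rw [Nat.mod_eq_of_lt hlt]
      exact hc k hk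
    · rw [heq, Nat.mod_self, hc0, ← hcn, ← heq]
      exact hc k hk
  refine ⟨fun k => c (k % n), ⟨by simpa using hc0, fun k => ?_⟩, hper⟩
  simp only [← Nat.mod_add_mod k n 1]
  exact hstep (k % n) (Nat.mod_lt k hn)

lemma IsTrajectory.append {x d : X} {c w : ℕ → X} {m : ℕ} (hc : IsTrajectory G x c)
    (hd : (c m, d) ∈ G) (hw : IsTrajectory G d w) :
    IsTrajectory G x (fun k => if k ≤ m then c k else w (k - (m + 1))) := by
  refine ⟨by simpa using hc.1, fun k => ?_⟩
  rcases lt_trichotomy k m with hk | rfl | hk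
  · simpa [hk.le, Nat.succ_le_of_lt hk] using hc.2 k
  · simpa [hw.1] using hd
  · simpa [hk.not_ge, (Nat.lt_succ_of_lt hk).not_ge, Nat.sub_add_comm hk] using hw.2 (k - (m + 1))

lemma IsTrajectory.isPO2 [TopologicalSpace X] {x : X} {s : ℕ → X} {V : Set (X × X)}
    (hs : IsTrajectory G x s) (hV : IsEntourage V) : IsPO2 G V s :=
  ⟨fun k => ⟨s (k + 1), hs.2 k⟩,
    fun k => ⟨s (k + 1), hs.2 k, subset_of_mem_nhdsSet hV (mem_diagonal _)⟩⟩

end Trajectories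

section Topology

variable {X : Type*} [TopologicalSpace X]

lemma eq_of_forall_isEntourage_exists_near [T2Space X] {a b : X}
    (h : ∀ U, IsEntourage U → ∃ u, (u, a) ∈ U ∧ (u, b) ∈ U) : a = b := by
  by_contra hab
  obtain ⟨Oa, Ob, hOa, hOb, haO, hbO, hdisj⟩ := t2_separation hab
  have hab_closed : IsClosed ({a, b} : Set X) := (Set.toFinite _).isClosed
  -- a point `U`-close to `a` must lie in `Oa`, one `U`-close to `b` in `Ob`
  let U := Oa ×ˢ Oa ∪ Ob ×ˢ Ob ∪ ({a, b}ᶜ ×ˢ {a, b}ᶜ)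
  have hU : IsEntourage U := by
    refine ((hOa.prod hOa).union (hOb.prod hOb) |>.union
      (hab_closed.isOpen_compl.prod hab_closed.isOpen_compl)).mem_nhdsSet.2 ?_
    rintro ⟨z, z'⟩ (rfl : z = z')
    by_cases hza : z = a
    · exact .inl (.inl ⟨hza ▸ haO, hza ▸ haO⟩)
    by_cases hzb : z = b
    · exact .inl (.inr ⟨hzb ▸ hbO, hzb ▸ hbO⟩)
    exact .inr ⟨by simp [hza, hzb], by simp [hza, hzb]⟩
  obtain ⟨u, hua, hub⟩ := h U hU
  have haOb : a ∉ Ob := hdisj.notMem_of_mem_left haO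
  have hbOa : b ∉ Oa := hdisj.notMem_of_mem_right hbO
  have huOa : u ∈ Oa := by simpa [U, haO, haOb] using hua
  have huOb : u ∈ Ob := by simpa [U, hbO, hbOa] using hub
  exact hdisj.notMem_of_mem_left huOa huOb

lemma continuous_of_isClosed_graph {Y : Type*} [TopologicalSpace Y] [CompactSpace Y]
    {f : X → Y} (hf : IsClosed {p : X × Y | p.2 = f p.1}) : Continuous f := by
  refine continuous_iff_isClosed.2 fun C hC => ?_
  have : f ⁻¹' C = Prod.fst '' ({p : X × Y | p.2 = f p.1} ∩ univ ×ˢ C) := by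
    ext x
    constructor
    · exact fun hx => ⟨(x, f x), ⟨rfl, trivial, hx⟩, rfl⟩
    · rintro ⟨⟨x', y⟩, ⟨rfl : y = f x', -, hy⟩, rfl⟩
      exact hy
  rw [this]
  exact isClosedMap_fst_of_compactSpace _ (hf.inter (isClosed_univ.prod hC))

end Topology

section Shadowing

variable {X : Type*} [TopologicalSpace X] [T2Space X] {G : Set (X × X)} {n : ℕ}

lemma IsTrajectory.apply_one_eq_of_shadowing21 (hshad : Shadowing21 G)
    (hper : ∀ y : X, ∃ t, IsTrajectory G y t ∧ Periodic t n) {x : X} {s : ℕ → X}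
    (hs : IsTrajectory G x s) : s 1 = s (n + 1) := by
  refine eq_of_forall_isEntourage_exists_near fun U hU => ?_
  obtain ⟨V, hV, hshadV⟩ := hshad U hU
  obtain ⟨y, -, hy⟩ := hshadV s (hs.isPO2 hV)
  obtain ⟨t, ht, htper⟩ := hper y
  have htn : t (n + 1) = t 1 := by rw [add_comm]; exact htper 1
  exact ⟨t 1, hy t ht 1, htn ▸ hy t ht (n + 1)⟩

lemma eq_of_mem_of_mem_of_shadowing21 (hn : 0 < n) (hshad : Shadowing21 G)
    (hper : ∀ y : X, ∃ t, IsTrajectory G y t ∧ Periodic t n) {x a b : X}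
    (ha : (x, a) ∈ G) (hb : (x, b) ∈ G) : a = b := by
  obtain ⟨c, hc, hcper⟩ := hper x
  have hcn : c n = x := by simpa [hc.1] using hcper 0
  suffices ∀ d, (x, d) ∈ G → d = c 1 from (this a ha).trans (this b hb).symm
  intro d hd
  obtain ⟨w, hw, -⟩ := hper d
  have := (hc.append (hcn ▸ hd) hw).apply_one_eq_of_shadowing21 hshad hper
  simpa [show 1 ≤ n from hn, hw.1] using this.symm

end Shadowing

theorem stmt_14_general {X : Type*} [TopologicalSpace X] [CompactSpace X] [T2Space X]
    (G : Set (X × X)) (hGclosed : IsClosed G)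
    (n : ℕ) (hn : 1 ≤ n) (hdiag : Set.diagonal X ⊆ relPow G n)
    (hshad : Shadowing21 G) :
    ∃ f : X → X, Continuous f ∧ G = {p : X × X | p.2 = f p.1} := by
  have hper : ∀ y : X, ∃ t, IsTrajectory G y t ∧ Periodic t n :=
    fun y => exists_periodic_trajectory hn (hdiag (mem_diagonal y))
  have hdom : ∀ x : X, ∃ y, (x, y) ∈ G := fun x => by
    obtain ⟨t, ht, -⟩ := hper x
    exact ⟨t 1, ht.1 ▸ ht.2 0⟩
  choose f hf using hdom
  have hgraph : G = {p : X × X | p.2 = f p.1} := by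
    ext ⟨x, y⟩
    exact ⟨fun h => eq_of_mem_of_mem_of_shadowing21 hn hshad hper h (hf x),
      fun (h : y = f x) => h ▸ hf x⟩
  exact ⟨f, continuous_of_isClosed_graph (hgraph ▸ hGclosed), hgraph⟩

/-- if Δ_X ⊆ Gⁿ for some positive n and (X,G) has the (2,1)-shadowing
property, then G is the graph of a continuous self-map. -/
theorem stmt_14 {X : Type*} [TopologicalSpace X] [CompactSpace X] [T2Space X] [Nonempty X]
    (G : Set (X × X)) (hGclosed : IsClosed G) (hGne : G.Nonempty)
    (hGpow : ∀ n : ℕ, 1 ≤ n → (relPow G n).Nonempty)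
    (n : ℕ) (hn : 1 ≤ n) (hdiag : Set.diagonal X ⊆ relPow G n)
    (hshad : Shadowing21 G) :
    ∃ f : X → X, Continuous f ∧ G = {p : X × X | p.2 = f p.1} :=
  stmt_14_general G hGclosed n hn hdiag hshad
end

section
/- Let (X, d) be a non-empty compact metric space and f : X → X an isometry (d(f(x), f(y)) = d(x, y) for all x, y ∈ X). Then (X, f) has the shadowing property if and only if X is totally disconnected. -/
/-!
An isometry maps `δ`-chains to `δ`-chains, so a `δ`-pseudo-orbit `(xₙ)` stays
`δ`-chain-connected to the true orbit of `x₀`. If `X` is totally disconnected and compact,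
`δ`-chains are short for small `δ`: each point has a clopen neighbourhood of small diameter, and
a clopen set in a compact space cannot be left by a chain with small enough steps. Hence `x₀`
shadows the pseudo-orbit. Conversely, for `δ > 0` the points reachable from `a` by `δ`-chains
form a clopen set, so any two points `a, b` of a connected set are joined by a `δ`-chain.
Shadowing the pseudo-orbit that walks along this chain (transported by the iterates of `f`) with
a point `y` puts both `a` and `b` within `ε` of `y`, so `a = b`.
-/

open Metric Filter Topology Set

theorem Relation.ReflTransGen.exists_seq {α : Type*} {r : α → α → Prop} (hr : ∀ a, r a a)
    {a b : α} (h : Relation.ReflTransGen r a b) :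
    ∃ (z : ℕ → α) (m : ℕ), z 0 = a ∧ z m = b ∧ ∀ k, r (z k) (z (k + 1)) := by
  induction h using Relation.ReflTransGen.head_induction_on with
  | refl => exact ⟨fun _ => b, 0, rfl, rfl, fun _ => hr b⟩
  | @head a c hac _ ih =>
    obtain ⟨z, m, hz0, hzm, hz⟩ := ih
    refine ⟨fun | 0 => a | k + 1 => z k, m + 1, rfl, hzm, ?_⟩
    rintro (_ | k)
    · simpa [hz0] using hac
    · exact hz k

theorem Isometry.iterate {X : Type*} [PseudoEMetricSpace X] {f : X → X} (hf : Isometry f)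
    (n : ℕ) : Isometry f^[n] := by
  induction n with
  | zero => exact isometry_id
  | succ n ih => exact ih.comp hf

section PseudoMetricSpace

variable {X : Type*} [PseudoMetricSpace X]

def HasShadowing (f : X → X) : Prop :=
  ∀ ε : ℝ, 0 < ε → ∃ δ : ℝ, 0 < δ ∧
    ∀ x : ℕ → X, (∀ n : ℕ, dist (f (x n)) (x (n + 1)) ≤ δ) →
      ∃ y : X, ∀ n : ℕ, dist (f^[n] y) (x n) < ε

abbrev DistChain (δ : ℝ) : X → X → Prop :=
  Relation.ReflTransGen fun a b : X => dist a b ≤ δ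

theorem Isometry.distChain {f : X → X} (hf : Isometry f) {δ : ℝ} {a b : X}
    (h : DistChain δ a b) : DistChain δ (f a) (f b) :=
  h.lift f fun _ _ hab => (hf.dist_eq _ _).trans_le hab

theorem isClopen_setOf_distChain {δ : ℝ} (hδ : 0 < δ) (a : X) :
    IsClopen {b | DistChain δ a b} := by
  refine ⟨isClosed_of_closure_subset fun b hb => ?_, isOpen_iff.2 fun b hb => ⟨δ, hδ, ?_⟩⟩
  · obtain ⟨c, hc, hcb⟩ := mem_closure_iff.1 hb δ hδ
    exact Relation.ReflTransGen.tail hc (dist_comm b c ▸ hcb.le)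
  · exact fun c hc => Relation.ReflTransGen.tail hb (mem_ball'.1 hc).le

theorem IsPreconnected.distChain {t : Set X} (ht : IsPreconnected t) {δ : ℝ} (hδ : 0 < δ)
    {a b : X} (ha : a ∈ t) (hb : b ∈ t) : DistChain δ a b :=
  ht.subset_isClopen (isClopen_setOf_distChain hδ a) ⟨a, ha, .refl⟩ hb

theorem HasShadowing.exists_forall_distChain_dist_lt {f : X → X} (hf : Isometry f)
    (hs : HasShadowing f) {ε : ℝ} (hε : 0 < ε) :
    ∃ δ > 0, ∀ a b : X, DistChain δ a b → dist a b < 2 * ε := by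
  obtain ⟨δ, hδ, hshadow⟩ := hs ε hε
  refine ⟨δ, hδ, fun a b hab => ?_⟩
  obtain ⟨z, m, hz0, hzm, hz⟩ := hab.exists_seq fun c : X => (dist_self c).trans_le hδ.le
  obtain ⟨y, hy⟩ := hshadow (fun n => f^[n] (z n)) fun n => by
    rw [← Function.iterate_succ_apply' f n, (hf.iterate _).dist_eq]
    exact hz n
  have hya : dist y a < ε := by simpa [hz0] using hy 0
  have hyb : dist y b < ε := by simpa [hzm, (hf.iterate m).dist_eq] using hy m
  calc dist a b ≤ dist y a + dist y b := dist_triangle_left a b y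
    _ < 2 * ε := by linarith

theorem IsClopen.eventually_forall_distChain_mem [CompactSpace X] {V : Set X} (hV : IsClopen V) :
    ∀ᶠ δ in 𝓝 (0 : ℝ), ∀ a ∈ V, ∀ b, DistChain δ a b → b ∈ V := by
  obtain ⟨r, hr, hrV⟩ := hV.isClosed.isCompact.exists_cthickening_subset_open hV.isOpen
    subset_rfl
  filter_upwards [eventually_lt_nhds hr] with δ hδr a ha b hab
  induction hab with
  | refl => exact ha
  | tail _ hcd hc =>
    exact hrV (mem_cthickening_of_dist_le _ _ r V hc ((dist_comm _ _).trans_le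
      (hcd.trans hδr.le)))

end PseudoMetricSpace

section MetricSpace

variable {X : Type*} [MetricSpace X]

theorem totallyDisconnectedSpace_of_hasShadowing {f : X → X} (hf : Isometry f)
    (hs : HasShadowing f) : TotallyDisconnectedSpace X := by
  refine ⟨fun t _ ht a ha b hb => eq_of_forall_dist_le fun ε hε => ?_⟩
  obtain ⟨δ, hδ, hchain⟩ := hs.exists_forall_distChain_dist_lt hf (half_pos hε)
  have := hchain a b (ht.distChain hδ ha hb)
  linarith

section Compact

variable [CompactSpace X]

theorem eventually_forall_distChain_dist_lt [TotallyDisconnectedSpace X] {ε : ℝ} (hε : 0 < ε) :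
    ∀ᶠ δ in 𝓝 (0 : ℝ), ∀ a b : X, DistChain δ a b → dist a b < ε := by
  suffices ∀ᶠ δ in 𝓝 (0 : ℝ), ∀ a ∈ univ, ∀ b : X, DistChain δ a b → dist a b < ε from
    this.mono fun δ h a => h a (mem_univ a)
  refine isCompact_univ.eventually_forall_of_forall_eventually fun c _ => ?_
  obtain ⟨V, hV, hcV, hVball⟩ := compact_exists_isClopen_in_isOpen (isOpen_ball (x := c))
    (mem_ball_self (half_pos hε))
  rw [nhds_prod_eq]
  filter_upwards [prod_mem_prod hV.eventually_forall_distChain_mem (hV.isOpen.mem_nhds hcV)]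
    with ⟨δ, a⟩ ⟨hδ, ha⟩ b hab
  have hac := mem_ball.1 (hVball ha)
  have hbc := mem_ball.1 (hVball (hδ a ha b hab))
  calc dist a b ≤ dist a c + dist b c := dist_triangle_right a b c
    _ < ε := by linarith

theorem hasShadowing_of_totallyDisconnectedSpace [TotallyDisconnectedSpace X] {f : X → X}
    (hf : Isometry f) : HasShadowing f := by
  intro ε hε
  obtain ⟨δ, hchain, hδ⟩ :=
    ((eventually_forall_distChain_dist_lt (X := X) hε).filter_mono nhdsWithin_le_nhds).and
      (self_mem_nhdsWithin (s := Ioi 0)) |>.exists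
  refine ⟨δ, hδ, fun x hx => ⟨x 0, fun n => hchain _ _ ?_⟩⟩
  induction n with
  | zero => exact .refl
  | succ n ih =>
    rw [Function.iterate_succ_apply']
    exact (hf.distChain ih).tail (hx n)

end Compact

end MetricSpace

theorem stmt_16_general {X : Type*} [MetricSpace X] [CompactSpace X]
    (f : X → X) (hf : ∀ x y : X, dist (f x) (f y) = dist x y) :
    (∀ ε : ℝ, 0 < ε → ∃ δ : ℝ, 0 < δ ∧
        ∀ x : ℕ → X, (∀ n : ℕ, dist (f (x n)) (x (n + 1)) ≤ δ) →
          ∃ y : X, ∀ n : ℕ, dist (f^[n] y) (x n) < ε) ↔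
      TotallyDisconnectedSpace X :=
  ⟨totallyDisconnectedSpace_of_hasShadowing (.of_dist_eq hf),
    fun _ => hasShadowing_of_totallyDisconnectedSpace (.of_dist_eq hf)⟩

/-- for an isometry f of a non-empty compact metric space, (X,f) has
the shadowing property iff X is totally disconnected. -/
theorem stmt_16 {X : Type*} [MetricSpace X] [CompactSpace X] [Nonempty X]
    (f : X → X) (hf : ∀ x y : X, dist (f x) (f y) = dist x y) :
    (∀ ε : ℝ, 0 < ε → ∃ δ : ℝ, 0 < δ ∧
        ∀ x : ℕ → X, (∀ n : ℕ, dist (f (x n)) (x (n + 1)) ≤ δ) →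
          ∃ y : X, ∀ n : ℕ, dist (f^[n] y) (x n) < ε) ↔
      TotallyDisconnectedSpace X :=
  stmt_16_general f hf
end
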